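/- Let α be a weak composition with α_i = 0, and let β satisfy α ⊴ β ⊴ qshift(α) in dominance order. Define γ by γ_i = β_i + β_{i+1}, γ_{i+1} = 0, and γ_j = β_j for j ∉ {i, i+1}. Then s̃_i(α) ⊴ γ ⊴ qshift(s̃_i(α)). -/

import Mathlib

/-!
Write `P_f(j)` for the prefix sums of `f`. The prefix sums of `qshift(v)` exceed those of `v`
by `E_v(j) = (first nonzero entry of v at or after j) - 1` when `v_j = 0`, and by `0` otherwise.
Merging `β_i, β_{i+1}` into position `i`, and swapping the zero `α_i` with `α_{i+1}`, both
replace the prefix sum at `i` by the one at `i + 1` and leave all others unchanged. The swap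
can only increase `E` at the matching index: seen from any position `≤ i` the first nonzero
entry is unchanged, and at `i + 1` the swapped composition has a zero. So both inequalities
follow from the hypotheses read at `i + 1` in place of `i`.
-/

open scoped Classical in
/-- The fundamental shift of a weak composition `v`: working right to left, any
positive entry `a` of `v` with a `0` immediately to its left is reduced to `1`,
and the remaining `a − 1` is shifted left so as to sit immediately to the right
of the next nonzero entry to its left (or into position `1` if there is none);
positive entries with a nonzero entry immediately to the left are unchanged,
and all other entries are `0`. -/
noncomputable def qshift (n : ℕ) (v : Fin n → ℕ) : Fin n → ℕ := fun p =>
  if v p ≠ 0 then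
    (if (p : ℕ) = 0 ∨ v ⟨(p : ℕ) - 1, by omega⟩ ≠ 0 then v p else 1)
  else
    if (p : ℕ) = 0 ∨ v ⟨(p : ℕ) - 1, by omega⟩ ≠ 0 then
      (if h : (Finset.univ.filter fun q : Fin n => p < q ∧ v q ≠ 0).Nonempty then
        v ((Finset.univ.filter fun q : Fin n => p < q ∧ v q ≠ 0).min' h) - 1
      else 0)
    else 0

/-- Dominance order on weak compositions of length `n`: `Dom n β γ` means every
partial sum of `β` is at most the corresponding partial sum of `γ`
(i.e. `β ⊴ γ`). -/
def Dom (n : ℕ) (β γ : Fin n → ℕ) : Prop :=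
  ∀ j : Fin n, ∑ p ∈ Finset.univ.filter (· ≤ j), β p
    ≤ ∑ p ∈ Finset.univ.filter (· ≤ j), γ p

open Finset

section

variable {n : ℕ}

def prefixSum (v : Fin n → ℕ) (j : Fin n) : ℕ :=
  ∑ p ∈ univ.filter (· ≤ j), v p

lemma prefixSum_zero (v : Fin n → ℕ) (h : 0 < n) : prefixSum v ⟨0, h⟩ = v ⟨0, h⟩ := by
  have hset : univ.filter (· ≤ (⟨0, h⟩ : Fin n)) = {⟨0, h⟩} := by
    ext p
    simp [Fin.le_def, Fin.ext_iff]
  rw [prefixSum, hset, sum_singleton]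

lemma prefixSum_of_val_eq_succ (v : Fin n → ℕ) {p q : Fin n} (hpq : (q : ℕ) = p + 1) :
    prefixSum v q = prefixSum v p + v q := by
  have hset : univ.filter (· ≤ q) = insert q (univ.filter (· ≤ p)) := by
    ext r
    simp only [mem_filter, mem_univ, true_and, mem_insert, Fin.le_def, Fin.ext_iff]
    omega
  have hq : q ∉ univ.filter (· ≤ p) := by
    simp only [mem_filter, mem_univ, true_and, not_le, Fin.lt_def]; omega
  rw [prefixSum, hset, sum_insert hq, add_comm]
  rfl

lemma Finset.sum_eq_sum_of_eq_off_pair {ι M : Type*} [DecidableEq ι] [AddCommMonoid M]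
    {s : Finset ι} {a b : ι} {f g : ι → M} (hab : a ≠ b) (ha : a ∈ s) (hb : b ∈ s)
    (hfg : ∀ p, p ≠ a → p ≠ b → f p = g p) (hsum : f a + f b = g a + g b) :
    ∑ p ∈ s, f p = ∑ p ∈ s, g p := by
  have hsub : {a, b} ⊆ s := insert_subset_iff.2 ⟨ha, singleton_subset_iff.2 hb⟩
  rw [← sum_sdiff hsub, ← sum_sdiff hsub (f := g), sum_pair hab, sum_pair hab, hsum]
  congr 1
  refine sum_congr rfl fun p hp => ?_
  simp only [mem_sdiff, mem_insert, mem_singleton, not_or] at hp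
  exact hfg p hp.2.1 hp.2.2

lemma prefixSum_eq_of_eq_off_pair {a b : Fin n} (hab : (b : ℕ) = a + 1) {f g : Fin n → ℕ}
    (hfg : ∀ p, p ≠ a → p ≠ b → f p = g p) (hsum : f a + f b = g a + g b) (hg : g b = 0)
    (j : Fin n) : prefixSum g j = prefixSum f (if j = a then b else j) := by
  have hbeyond : ∀ j, b ≤ j → prefixSum g j = prefixSum f j := by
    intro j hj
    refine (sum_eq_sum_of_eq_off_pair (s := univ.filter (· ≤ j)) ?_ ?_ ?_ hfg hsum).symm
    · simp [Fin.ext_iff, hab]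
    · simp only [mem_filter, mem_univ, true_and, Fin.le_def] at hj ⊢; omega
    · simpa using hj
  split_ifs with hj
  · subst hj
    rw [← hbeyond _ le_rfl, prefixSum_of_val_eq_succ g hab, hg, add_zero]
  · rcases lt_or_ge j a with hlt | hge
    · refine sum_congr rfl fun p hp => (hfg p ?_ ?_).symm <;>
        · simp only [mem_filter, mem_univ, true_and] at hp
          simp only [ne_eq, Fin.ext_iff]
          simp only [Fin.lt_def, Fin.le_def] at hlt hp
          omega
    · exact hbeyond j (by simp only [Fin.ext_iff, Fin.le_def] at hj hge ⊢; omega)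

open scoped Classical in
noncomputable def firstNonzero (v : Fin n → ℕ) (p : Fin n) : ℕ :=
  if h : (univ.filter fun q => p ≤ q ∧ v q ≠ 0).Nonempty then
    v ((univ.filter fun q => p ≤ q ∧ v q ≠ 0).min' h)
  else 0

section FirstNonzero

variable {v w : Fin n → ℕ}

lemma firstNonzero_of_ne_zero {p : Fin n} (h : v p ≠ 0) : firstNonzero v p = v p := by
  have hmem : p ∈ univ.filter fun q => p ≤ q ∧ v q ≠ 0 := by simp [h]
  rw [firstNonzero, dif_pos ⟨p, hmem⟩]
  congr
  exact le_antisymm (min'_le _ _ hmem) (le_min' _ _ _ fun q hq => (mem_filter.1 hq).2.1)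

lemma firstNonzero_of_eq_zero {p q : Fin n} (hpq : (q : ℕ) = p + 1) (h : v p = 0) :
    firstNonzero v p = firstNonzero v q := by
  have hset : (univ.filter fun r => p ≤ r ∧ v r ≠ 0) = univ.filter fun r => q ≤ r ∧ v r ≠ 0 := by
    refine filter_congr fun r _ => ⟨fun ⟨hr, hv⟩ => ⟨?_, hv⟩, fun ⟨hr, hv⟩ => ⟨?_, hv⟩⟩
    · have hpr : p ≠ r := by rintro rfl; exact hv h
      simp only [Fin.le_def, ne_eq, Fin.ext_iff] at hr hpr ⊢
      omega
    · simp only [Fin.le_def] at hr ⊢; omega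
  rw [firstNonzero, firstNonzero, hset]

lemma firstNonzero_congr {p : Fin n} (h : ∀ q, p ≤ q → v q = w q) :
    firstNonzero v p = firstNonzero w p := by
  have hset : (univ.filter fun q => p ≤ q ∧ v q ≠ 0) = univ.filter fun q => p ≤ q ∧ w q ≠ 0 :=
    filter_congr fun q _ => and_congr_right fun hq => by rw [h q hq]
  rw [firstNonzero, firstNonzero, hset]
  split_ifs with hne
  · exact h _ (mem_filter.1 (min'_mem _ hne)).2.1
  · rfl

lemma qshift_of_ne_zero {p : Fin n} (h : v p ≠ 0) :
    qshift n v p = if (p : ℕ) = 0 ∨ v ⟨(p : ℕ) - 1, by omega⟩ ≠ 0 then v p else 1 :=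
  if_pos h

lemma qshift_of_eq_zero {p : Fin n} (h : v p = 0) :
    qshift n v p = if (p : ℕ) = 0 ∨ v ⟨(p : ℕ) - 1, by omega⟩ ≠ 0 then firstNonzero v p - 1
      else 0 := by
  have hset : (univ.filter fun q => p < q ∧ v q ≠ 0) = univ.filter fun q => p ≤ q ∧ v q ≠ 0 :=
    filter_congr fun q _ => ⟨fun ⟨hq, hv⟩ => ⟨hq.le, hv⟩,
      fun ⟨hq, hv⟩ => ⟨lt_of_le_of_ne hq (by rintro rfl; exact hv h), hv⟩⟩
  rw [qshift, if_neg (not_not.2 h), hset, firstNonzero]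
  split_ifs <;> rfl

end FirstNonzero

noncomputable def qshiftExcess (v : Fin n → ℕ) (p : Fin n) : ℕ :=
  if v p = 0 then firstNonzero v p - 1 else 0

lemma qshift_zero_eq (v : Fin n → ℕ) (h : 0 < n) :
    qshift n v ⟨0, h⟩ = v ⟨0, h⟩ + qshiftExcess v ⟨0, h⟩ := by
  by_cases hv : v ⟨0, h⟩ = 0
  · rw [qshift_of_eq_zero hv, if_pos (Or.inl rfl), qshiftExcess, if_pos hv, hv, zero_add]
  · rw [qshift_of_ne_zero hv, if_pos (Or.inl rfl), qshiftExcess, if_neg hv, add_zero]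

lemma qshiftExcess_add_qshift_of_val_eq_succ (v : Fin n → ℕ) {p q : Fin n}
    (hpq : (q : ℕ) = p + 1) :
    qshiftExcess v p + qshift n v q = v q + qshiftExcess v q := by
  have hprev : (⟨(q : ℕ) - 1, by omega⟩ : Fin n) = p := Fin.ext (by simp [hpq])
  have hq0 : (q : ℕ) ≠ 0 := by omega
  rcases eq_or_ne (v q) 0 with hq | hq <;> rcases eq_or_ne (v p) 0 with hp | hp
  · simp [qshiftExcess, qshift_of_eq_zero hq, hprev, hp, hq, hq0,
      firstNonzero_of_eq_zero hpq hp]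
  · simp [qshiftExcess, qshift_of_eq_zero hq, hprev, hp, hq]
  · simp [qshiftExcess, qshift_of_ne_zero hq, hprev, hp, hq, hq0,
      firstNonzero_of_eq_zero hpq hp, firstNonzero_of_ne_zero hq]
    omega
  · simp [qshiftExcess, qshift_of_ne_zero hq, hprev, hp, hq]

lemma prefixSum_qshift (v : Fin n → ℕ) (p : Fin n) :
    prefixSum (qshift n v) p = prefixSum v p + qshiftExcess v p := by
  obtain ⟨k, hk⟩ := p
  induction k with
  | zero => rw [prefixSum_zero, prefixSum_zero, qshift_zero_eq]
  | succ k ih =>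
    have hsucc : ((⟨k + 1, hk⟩ : Fin n) : ℕ) = (⟨k, by omega⟩ : Fin n) + 1 := rfl
    rw [prefixSum_of_val_eq_succ _ hsucc, prefixSum_of_val_eq_succ _ hsucc, ih, add_assoc,
      qshiftExcess_add_qshift_of_val_eq_succ v hsucc, add_assoc]

lemma comp_swap_of_eq {α β : Type*} [DecidableEq α] {f : α → β} {a b : α} (h : f a = f b) :
    f ∘ Equiv.swap a b = f := by
  rw [Equiv.comp_swap_eq_update, h, Function.update_eq_self, ← h, Function.update_eq_self]

section Swap

variable {v : Fin n → ℕ} {a b : Fin n}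

lemma firstNonzero_comp_swap_of_le (hab : (b : ℕ) = a + 1) (hv : v a = 0) {p : Fin n}
    (hp : p ≤ a) : firstNonzero (v ∘ Equiv.swap a b) p = firstNonzero v p := by
  suffices key : ∀ k (hk : k ≤ (a : ℕ)),
      firstNonzero (v ∘ Equiv.swap a b) ⟨k, by omega⟩ = firstNonzero v ⟨k, by omega⟩ from
    key p hp
  intro k hk
  induction hk using Nat.decreasingInduction with
  | self =>
    rcases eq_or_ne (v b) 0 with hvb | hvb
    · rw [comp_swap_of_eq (hv.trans hvb.symm)]
    · have hw : (v ∘ Equiv.swap a b) a = v b := by simp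
      rw [firstNonzero_of_ne_zero (hw ▸ hvb), hw, firstNonzero_of_eq_zero hab hv,
        firstNonzero_of_ne_zero hvb]
  | of_succ k hka ih =>
    have hsucc : ((⟨k + 1, by omega⟩ : Fin n) : ℕ) = (⟨k, by omega⟩ : Fin n) + 1 := rfl
    have hw : (v ∘ Equiv.swap a b) ⟨k, by omega⟩ = v ⟨k, by omega⟩ :=
      congrArg v (Equiv.swap_apply_of_ne_of_ne (by simp [Fin.ext_iff]; omega)
        (by simp [Fin.ext_iff]; omega))
    rcases eq_or_ne (v ⟨k, by omega⟩) 0 with hvk | hvk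
    · rw [firstNonzero_of_eq_zero hsucc (hw ▸ hvk), firstNonzero_of_eq_zero hsucc hvk, ih]
    · rw [firstNonzero_of_ne_zero (hw ▸ hvk), firstNonzero_of_ne_zero hvk, hw]

lemma qshiftExcess_le_comp_swap (hab : (b : ℕ) = a + 1) (hv : v a = 0) (j : Fin n) :
    qshiftExcess v (if j = a then b else j) ≤ qshiftExcess (v ∘ Equiv.swap a b) j := by
  rcases lt_trichotomy j a with hja | rfl | haj
  · have hjb : j ≠ b := by simp only [Fin.lt_def, ne_eq, Fin.ext_iff] at hja ⊢; omega
    rw [if_neg hja.ne, qshiftExcess, qshiftExcess, Function.comp_apply,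
      Equiv.swap_apply_of_ne_of_ne hja.ne hjb, firstNonzero_comp_swap_of_le hab hv hja.le]
  · rw [if_pos rfl, qshiftExcess, qshiftExcess, firstNonzero_comp_swap_of_le hab hv le_rfl,
      firstNonzero_of_eq_zero hab hv]
    simp
  rw [if_neg haj.ne']
  rcases eq_or_ne j b with rfl | hjb
  · rcases eq_or_ne (v j) 0 with hvj | hvj
    · rw [comp_swap_of_eq (hv.trans hvj.symm)]
    · simp [qshiftExcess, hvj]
  · have hagree : ∀ q, j ≤ q → v q = (v ∘ Equiv.swap a b) q := fun q hjq => by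
      simp only [Fin.lt_def, Fin.le_def, ne_eq, Fin.ext_iff] at haj hjb hjq
      rw [Function.comp_apply, Equiv.swap_apply_of_ne_of_ne] <;> simp only [ne_eq, Fin.ext_iff] <;>
        omega
    rw [qshiftExcess, qshiftExcess, ← hagree _ le_rfl, firstNonzero_congr hagree]

end Swap

end

/-- Lemma 5 of the paper: let `α` be a weak composition with
`αᵢ = 0`, and `β` with `α ⊴ β ⊴ qshift(α)`.  Define `γ` by `γᵢ = βᵢ + βᵢ₊₁`,
`γᵢ₊₁ = 0`, and `γⱼ = βⱼ` otherwise.  Then `s̃ᵢ(α) ⊴ γ ⊴ qshift(s̃ᵢ(α))`.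
Since `αᵢ = 0`, Hivert's swap `s̃ᵢ(α)` is just `α` with entries `i, i+1`
exchanged. -/
theorem lemma_siqshift1 (n i : ℕ) (hi : i + 1 < n) (α β : Fin n → ℕ)
    (h0 : α ⟨i, by omega⟩ = 0)
    (h1 : Dom n α β) (h2 : Dom n β (qshift n α)) :
    Dom n (α ∘ Equiv.swap (⟨i, by omega⟩ : Fin n) ⟨i + 1, hi⟩)
        (Function.update (Function.update β ⟨i, by omega⟩
          (β ⟨i, by omega⟩ + β ⟨i + 1, hi⟩)) ⟨i + 1, hi⟩ 0) ∧
    Dom n (Function.update (Function.update β ⟨i, by omega⟩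
          (β ⟨i, by omega⟩ + β ⟨i + 1, hi⟩)) ⟨i + 1, hi⟩ 0)
        (qshift n (α ∘ Equiv.swap (⟨i, by omega⟩ : Fin n) ⟨i + 1, hi⟩)) := by
  set a : Fin n := ⟨i, by omega⟩
  set b : Fin n := ⟨i + 1, hi⟩
  set γ := Function.update (Function.update β a (β a + β b)) b 0
  have hab : (b : ℕ) = a + 1 := rfl
  have hne : a ≠ b := fun h => by rw [h] at hab; omega
  have hα : ∀ j, prefixSum (α ∘ Equiv.swap a b) j = prefixSum α (if j = a then b else j) :=
    prefixSum_eq_of_eq_off_pair hab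
      (fun p hpa hpb => by simp [Equiv.swap_apply_of_ne_of_ne hpa hpb]) (by simp [h0, add_comm])
      (by simp [h0])
  have hγ : ∀ j, prefixSum γ j = prefixSum β (if j = a then b else j) :=
    prefixSum_eq_of_eq_off_pair hab (fun p hpa hpb => by simp [γ, hpa, hpb])
      (by simp [γ, hne]) (by simp [γ])
  refine ⟨fun j => ?_, fun j => ?_⟩
  · change prefixSum (α ∘ Equiv.swap a b) j ≤ prefixSum γ j
    rw [hα, hγ]
    exact h1 _
  · change prefixSum γ j ≤ prefixSum (qshift n (α ∘ Equiv.swap a b)) j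
    rw [hγ, prefixSum_qshift, hα]
    set j' := if j = a then b else j
    calc prefixSum β j' ≤ prefixSum (qshift n α) j' := h2 j'
      _ = prefixSum α j' + qshiftExcess α j' := prefixSum_qshift α j'
      _ ≤ prefixSum α j' + qshiftExcess (α ∘ Equiv.swap a b) j :=
        Nat.add_le_add_left (qshiftExcess_le_comp_swap hab h0 j) _
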